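/- (Nine lemma, middle version.) Consider a commutative 3×3 diagram in C with rows K --u--> K' --u'--> K'', A --a--> A' --a'--> A'', B --b--> B' --b'--> B'' and columns K → A → B (morphisms k, f), K' → A' → B' (morphisms k', f'), K'' → A'' → B'' (morphisms k'', f''), in which all three columns are short Z-exact sequences and the induced morphisms Z(b') : Z(B') → Z(B'') and Z(f'') : Z(A'') → Z(B'') between zero parts are isomorphisms. If the composite a'∘a factors through a trivial object (a'∘a ∈ N_Z) and the first and third rows (K → K' → K'' and B → B' → B'') are short Z-exact sequences, then the middle row A → A' → A'' is a short Z-exact sequence. -/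

import Mathlib

open CategoryTheory CategoryTheory.Limits

universe v u

/-- A full subcategory of "trivial" objects, given by a predicate `Z` on objects,
satisfying conditions (i)-(iii):
(i) every object `A` has a monomorphism `ε A : zpart A ⟶ A` with `zpart A` trivial,
unique up to isomorphism among monomorphisms into `A` with trivial domain;
(ii) for every `A` and trivial `W`, `Hom(W, A)` has at most one element;
(iii) for every monomorphism `z : W ⟶ A` and morphism `z' : W' ⟶ A` with `W, W'`
trivial, there is a unique `φ : W' ⟶ W` with `φ ≫ z = z'`. -/
structure TrivialObjects (C : Type u) [Category.{v} C] where
  Z : C → Prop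
  zpart : C → C
  zpart_mem : ∀ A : C, Z (zpart A)
  ε : ∀ A : C, zpart A ⟶ A
  ε_mono : ∀ A : C, Mono (ε A)
  zsub_uniq : ∀ (A W : C), Z W → ∀ (e : W ⟶ A), Mono e →
    ∃ φ : W ≅ zpart A, φ.hom ≫ ε A = e
  posetal : ∀ (W A : C), Z W → ∀ f g : W ⟶ A, f = g
  zlift : ∀ (W A : C) (z : W ⟶ A), Mono z → Z W →
    ∀ (W' : C) (z' : W' ⟶ A), Z W' → ∃! φ : W' ⟶ W, φ ≫ z = z'

variable {C : Type u} [Category.{v} C]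

/-- `N_Z`: the class of morphisms factoring through a trivial object. -/
def InNZ (T : TrivialObjects C) {A B : C} (f : A ⟶ B) : Prop :=
  ∃ (W : C) (_ : T.Z W) (p : A ⟶ W) (i : W ⟶ B), p ≫ i = f

/-- `k : K ⟶ A` is a `Z`-kernel of `f : A ⟶ B` if `k ≫ f ∈ N_Z` and every
`e : E ⟶ A` with `e ≫ f ∈ N_Z` factors uniquely through `k`. -/
def IsZKernel (T : TrivialObjects C) {K A B : C} (k : K ⟶ A) (f : A ⟶ B) : Prop :=
  InNZ T (k ≫ f) ∧ ∀ (E : C) (e : E ⟶ A), InNZ T (e ≫ f) → ∃! φ : E ⟶ K, φ ≫ k = e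

/-- A sequence `K --k--> A --f--> B` is short `Z`-exact if `f` is a regular
epimorphism and `k` is a `Z`-kernel of `f`. -/
def ShortZExact (T : TrivialObjects C) {K A B : C} (k : K ⟶ A) (f : A ⟶ B) : Prop :=
  Nonempty (RegularEpi f) ∧ IsZKernel T k f

/-- Every morphism factors as a regular epimorphism followed by a monomorphism. -/
def RegEpiMonoFact (C : Type u) [Category.{v} C] : Prop :=
  ∀ {X Y : C} (f : X ⟶ Y), ∃ (I : C) (p : X ⟶ I) (i : I ⟶ Y),
    Nonempty (RegularEpi p) ∧ Mono i ∧ p ≫ i = f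

/-- Regular epimorphisms are stable under pullback. -/
def RegEpiPullbackStable (C : Type u) [Category.{v} C] : Prop :=
  ∀ {P X Y W : C} (fst : P ⟶ X) (snd : P ⟶ Y) (f : X ⟶ W) (g : Y ⟶ W),
    IsPullback fst snd f g → Nonempty (RegularEpi g) → Nonempty (RegularEpi fst)

/-- Protomodularity property (P1): in a commutative diagram of two horizontally
composed squares, if the left square and the outer rectangle are pullbacks and the
middle vertical morphism is a regular epimorphism, then the right square is a
pullback. -/
def ProtoP1 (C : Type u) [Category.{v} C] : Prop :=
  ∀ {A B X A' B' X' : C} (f : A ⟶ B) (g : B ⟶ X) (f' : A' ⟶ B') (g' : B' ⟶ X')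
    (a : A ⟶ A') (b : B ⟶ B') (c : X ⟶ X'),
    g ≫ c = b ≫ g' →
    IsPullback f a b f' → IsPullback (f ≫ g) a c (f' ≫ g') →
    Nonempty (RegularEpi b) → IsPullback g b c g'

/-- Protomodularity property (P2): pullbacks reflect monomorphisms; if the pullback
`fst` of `g` along some morphism `f` is a monomorphism, then `g` is a monomorphism. -/
def ProtoP2 (C : Type u) [Category.{v} C] : Prop :=
  ∀ {P X Y W : C} (fst : P ⟶ X) (snd : P ⟶ Y) (f : X ⟶ W) (g : Y ⟶ W),
    IsPullback fst snd f g → Mono fst → Mono g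

section NineAux

variable {C : Type u} [Category.{v} C]

lemma inNZ_of_trivial (T : TrivialObjects C) {W A : C} (hW : T.Z W) (g : W ⟶ A) :
    InNZ T g :=
  ⟨W, hW, 𝟙 W, g, Category.id_comp g⟩

lemma inNZ_comp_left (T : TrivialObjects C) {X A B : C} (e : X ⟶ A) {g : A ⟶ B}
    (h : InNZ T g) : InNZ T (e ≫ g) := by
  obtain ⟨W, hW, p, i, rfl⟩ := h
  exact ⟨W, hW, e ≫ p, i, by simp⟩

lemma inNZ_comp_right (T : TrivialObjects C) {A B Y : C} {g : A ⟶ B} (h : InNZ T g)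
    (e : B ⟶ Y) : InNZ T (g ≫ e) := by
  obtain ⟨W, hW, p, i, rfl⟩ := h
  exact ⟨W, hW, p, i ≫ e, by simp⟩

lemma inNZ_factors_eps (T : TrivialObjects C) {X B : C} {g : X ⟶ B} (h : InNZ T g) :
    ∃ p : X ⟶ T.zpart B, p ≫ T.ε B = g := by
  obtain ⟨W, hW, p, i, rfl⟩ := h
  obtain ⟨φ, hφ, -⟩ := T.zlift (T.zpart B) B (T.ε B) (T.ε_mono B) (T.zpart_mem B) W i hW
  exact ⟨p ≫ φ, by rw [Category.assoc, hφ]⟩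

lemma IsZKernel.mono' {T : TrivialObjects C} {K A B : C} {k : K ⟶ A} {f : A ⟶ B}
    (hk : IsZKernel T k f) : Mono k := by
  constructor
  intro X g h hgh
  have hN : InNZ T ((g ≫ k) ≫ f) := by
    rw [Category.assoc]; exact inNZ_comp_left T g hk.1
  obtain ⟨φ, hφ, huniq⟩ := hk.2 X (g ≫ k) hN
  exact (huniq g rfl).trans (huniq h hgh.symm).symm

lemma inNZ_of_comp_zkernel {T : TrivialObjects C} {X M Y Y' : C} {m : M ⟶ Y} {n : Y ⟶ Y'}
    (hm : IsZKernel T m n) {g : X ⟶ M} (h : InNZ T (g ≫ m)) : InNZ T g := by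
  haveI := hm.mono'
  obtain ⟨W, hW, p, i, hpi⟩ := h
  obtain ⟨j, hj, -⟩ := hm.2 W i (inNZ_of_trivial T hW _)
  refine ⟨W, hW, p, j, ?_⟩
  have : (p ≫ j) ≫ m = g ≫ m := by rw [Category.assoc, hj, hpi]
  exact (cancel_mono m).1 this

lemma mono_of_comp_eq {X Y Z : C} {q : X ⟶ Y} {r : Y ⟶ Z} {qr : X ⟶ Z}
    (h : q ≫ r = qr) (hm : Mono qr) : Mono q := by
  constructor
  intro W g₁ g₂ hg
  haveI := hm
  rw [← cancel_mono qr, ← h, ← Category.assoc, ← Category.assoc, hg]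

lemma mono_fst_of_isPullback {P X Y Z : C} {fst : P ⟶ X} {snd : P ⟶ Y} {f : X ⟶ Z}
    {g : Y ⟶ Z} (h : IsPullback fst snd f g) (hg : Mono g) : Mono fst := by
  constructor
  intro W a b hab
  haveI := hg
  have h2 : a ≫ snd = b ≫ snd := by
    rw [← cancel_mono g, Category.assoc, Category.assoc, ← h.w, ← Category.assoc,
      ← Category.assoc, hab]
  exact h.hom_ext hab h2

lemma zkernel_isPullback {T : TrivialObjects C} {K A B : C} {k : K ⟶ A} {f : A ⟶ B}
    (hk : IsZKernel T k f) :
    ∃ α : K ⟶ T.zpart B, IsPullback k α f (T.ε B) := by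
  haveI hkm : Mono k := hk.mono'
  haveI hεm : Mono (T.ε B) := T.ε_mono B
  obtain ⟨α, hα⟩ := inNZ_factors_eps T hk.1
  have comm : k ≫ f = α ≫ T.ε B := hα.symm
  have hNZ : ∀ s : PullbackCone f (T.ε B), InNZ T (s.fst ≫ f) := fun s =>
    ⟨T.zpart B, T.zpart_mem B, s.snd, T.ε B, s.condition.symm⟩
  have hex : ∀ s : PullbackCone f (T.ε B), ∃! z : s.pt ⟶ K, z ≫ k = s.fst :=
    fun s => hk.2 s.pt s.fst (hNZ s)
  refine ⟨α, IsPullback.of_isLimit (PullbackCone.IsLimit.mk comm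
    (fun s => (hex s).choose)
    (fun s => (hex s).choose_spec.1)
    (fun s => ?_)
    (fun s m hm _ => (hex s).choose_spec.2 m hm))⟩
  show (hex s).choose ≫ α = s.snd
  rw [← cancel_mono (T.ε B), Category.assoc, ← comm, ← Category.assoc,
    (hex s).choose_spec.1, s.condition]

lemma regularEpi_of_strongEpi (hfact : RegEpiMonoFact C) {X Y : C} (f : X ⟶ Y)
    (hf : StrongEpi f) : Nonempty (RegularEpi f) := by
  haveI := hf
  obtain ⟨I, p, i, ⟨hp⟩, hi, hpi⟩ := hfact f
  haveI := hi
  have sq : CommSq p f i (𝟙 Y) := ⟨by rw [Category.comp_id, hpi]⟩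
  haveI : HasLiftingProperty f i := StrongEpi.llp i
  have hfacl : f ≫ sq.lift = p := sq.fac_left
  have hfacr : sq.lift ≫ i = 𝟙 Y := sq.fac_right
  have hinv : i ≫ sq.lift = 𝟙 I := by
    rw [← cancel_mono i, Category.assoc, hfacr, Category.comp_id, Category.id_comp]
  haveI : IsIso i := ⟨sq.lift, hinv, hfacr⟩
  refine ⟨{ W := hp.W, left := hp.left, right := hp.right,
            w := by rw [← hpi, ← Category.assoc, ← Category.assoc, hp.w],
            isColimit := ?_ }⟩
  refine Cofork.IsColimit.mk' _ (fun s => ?_)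
  obtain ⟨d, hd⟩ := Cofork.IsColimit.desc' hp.isColimit s.π s.condition
  refine ⟨inv i ≫ d, ?_, ?_⟩
  · have : Cofork.π (Cofork.ofπ p hp.w) = p := rfl
    rw [this] at hd
    show f ≫ inv i ≫ d = s.π
    rw [← hpi, Category.assoc, IsIso.hom_inv_id_assoc, hd]
  · intro m hm
    haveI : Epi f := StrongEpi.epi
    have h1 : f ≫ m = s.π := hm
    have h2 : f ≫ inv i ≫ d = s.π := by
      have : Cofork.π (Cofork.ofπ p hp.w) = p := rfl
      rw [this] at hd
      rw [← hpi, Category.assoc, IsIso.hom_inv_id_assoc, hd]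
    exact (cancel_epi f).1 (h1.trans h2.symm)

lemma keyIso (hP1 : ProtoP1 C) (T : TrivialObjects C) {K M A B : C}
    (k : K ⟶ A) (f : A ⟶ B) (hk : IsZKernel T k f)
    (m : M ⟶ A) (hmm : Mono m) (j : K ⟶ M) (hj : j ≫ m = k)
    (hre : Nonempty (RegularEpi (m ≫ f))) : IsIso m := by
  haveI := hmm
  haveI hkm : Mono k := hk.mono'
  haveI hjm : Mono j := by
    refine mono_of_comp_eq hj hkm
  have hjz : IsZKernel T j (m ≫ f) := by
    constructor
    · rw [← Category.assoc, hj]; exact hk.1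
    · intro E e he
      rw [← Category.assoc] at he
      obtain ⟨z, hz, hzu⟩ := hk.2 E (e ≫ m) he
      refine ⟨z, ?_, ?_⟩
      · show z ≫ j = e
        rw [← cancel_mono m, Category.assoc, hj, hz]
      · intro y hy
        apply hzu
        show y ≫ k = e ≫ m
        rw [← hj, ← Category.assoc, hy]
  obtain ⟨α, hpb1⟩ := zkernel_isPullback hjz
  obtain ⟨α', hpb2⟩ := zkernel_isPullback hk
  haveI := T.ε_mono B
  have hαα : α = α' := by
    rw [← cancel_mono (T.ε B), ← hpb1.w, ← hpb2.w, ← hj, Category.assoc]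
  have houter : IsPullback (j ≫ m) α f (T.ε B ≫ 𝟙 B) := by
    rw [hj, hαα, Category.comp_id]
    exact hpb2
  have hfin : IsPullback m (m ≫ f) f (𝟙 B) :=
    hP1 j m (T.ε B) (𝟙 B) α (m ≫ f) f (Category.comp_id _).symm hpb1 houter hre
  have hid : IsPullback (𝟙 A) f f (𝟙 B) := IsPullback.of_id_fst
  have heq : (hfin.isoIsPullback _ _ hid).hom ≫ 𝟙 A = m :=
    IsPullback.isoIsPullback_hom_fst (h := hfin) (h' := hid)
  rw [show m = (hfin.isoIsPullback _ _ hid).hom from by simpa using heq.symm]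
  infer_instance

end NineAux

/-- Nine lemma, middle version: in a commutative 3×3 diagram with short `Z`-exact
columns, with `Z(b')` and `Z(f'')` isomorphisms, if `a' ∘ a` factors through a
trivial object and the first and third rows are short `Z`-exact, then the middle
row is short `Z`-exact. -/
theorem statement19 [HasFiniteLimits C]
    (hfact : RegEpiMonoFact C) (hstab : RegEpiPullbackStable C)
    (hP1 : ProtoP1 C) (hP2 : ProtoP2 C)
    (T : TrivialObjects C)
    {K K' K'' A A' A'' B B' B'' : C}
    (u : K ⟶ K') (u' : K' ⟶ K'')
    (a : A ⟶ A') (a' : A' ⟶ A'')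
    (b : B ⟶ B') (b' : B' ⟶ B'')
    (k : K ⟶ A) (f : A ⟶ B)
    (k' : K' ⟶ A') (f' : A' ⟶ B')
    (k'' : K'' ⟶ A'') (f'' : A'' ⟶ B'')
    (hsq1 : k ≫ a = u ≫ k') (hsq2 : k' ≫ a' = u' ≫ k'')
    (hsq3 : f ≫ b = a ≫ f') (hsq4 : f' ≫ b' = a' ≫ f'')
    (hcol1 : ShortZExact T k f) (hcol2 : ShortZExact T k' f')
    (hcol3 : ShortZExact T k'' f'')
    (hZb' : ∃ z : T.zpart B' ⟶ T.zpart B'', z ≫ T.ε B'' = T.ε B' ≫ b' ∧ IsIso z)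
    (hZf'' : ∃ z : T.zpart A'' ⟶ T.zpart B'', z ≫ T.ε B'' = T.ε A'' ≫ f'' ∧ IsIso z)
    (haa' : InNZ T (a ≫ a'))
    (hrow1 : ShortZExact T u u') (hrow3 : ShortZExact T b b') :
    ShortZExact T a a' := by
  classical
  obtain ⟨hfre, hkf⟩ := hcol1
  obtain ⟨hf're, hk'f'⟩ := hcol2
  obtain ⟨hf''re, hk''f''⟩ := hcol3
  obtain ⟨hu're, huu'⟩ := hrow1
  obtain ⟨hb're, hbb'⟩ := hrow3
  haveI hbm : Mono b := hbb'.mono'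
  haveI hkm : Mono k := hkf.mono'
  haveI hk'm : Mono k' := hk'f'.mono'
  haveI hk''m : Mono k'' := hk''f''.mono'
  haveI hum : Mono u := huu'.mono'
  -- Step 1 : a' is a regular epimorphism
  have ha're : Nonempty (RegularEpi a') := by
    obtain ⟨I, p, m', ⟨hp⟩, hm', hpm'⟩ := hfact a'
    haveI := hm'
    haveI := isRegularEpi_of_regularEpi hp
    haveI : IsRegularEpi f' := ⟨hf're⟩
    haveI : IsRegularEpi b' := ⟨hb're⟩
    haveI : IsRegularEpi u' := ⟨hu're⟩
    haveI hs1 : StrongEpi (f' ≫ b') := strongEpi_comp f' b'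
    have hpmf : p ≫ m' ≫ f'' = f' ≫ b' := by
      rw [← Category.assoc, hpm', ← hsq4]
    haveI hs2 : StrongEpi (p ≫ m' ≫ f'') := by rw [hpmf]; exact hs1
    haveI hs3 : StrongEpi (m' ≫ f'') := strongEpi_of_strongEpi p (m' ≫ f'')
    have hre : Nonempty (RegularEpi (m' ≫ f'')) :=
      regularEpi_of_strongEpi hfact (m' ≫ f'') hs3
    have sq : CommSq (k' ≫ p) u' m' k'' :=
      ⟨by rw [Category.assoc, hpm', hsq2]⟩
    haveI : HasLiftingProperty u' m' := StrongEpi.llp m'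
    haveI : IsIso m' := keyIso hP1 T k'' f'' hk''f'' m' hm' sq.lift sq.fac_right hre
    have := regularEpi_of_strongEpi hfact (p ≫ m') (strongEpi_comp p m')
    rwa [hpm'] at this
  -- Step 2 : a is a monomorphism
  have hNA : ∀ {X : C} (x : X ⟶ K') (y : X ⟶ A), x ≫ k' = y ≫ a → InNZ T (y ≫ f) := by
    intro X x y hxy
    apply inNZ_of_comp_zkernel hbb'
    have : (y ≫ f) ≫ b = x ≫ (k' ≫ f') := by
      rw [Category.assoc, hsq3, ← Category.assoc, ← hxy, Category.assoc]
    rw [this]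
    exact inNZ_comp_left T x hk'f'.1
  have hpbK : IsPullback u k k' a := by
    have hex : ∀ s : PullbackCone k' a, ∃! z : s.pt ⟶ K, z ≫ k = s.snd :=
      fun s => hkf.2 s.pt s.snd (hNA s.fst s.snd s.condition)
    refine IsPullback.of_isLimit (PullbackCone.IsLimit.mk hsq1.symm
      (fun s => (hex s).choose) (fun s => ?_)
      (fun s => (hex s).choose_spec.1)
      (fun s m₁ hm₁ hm₂ => (hex s).choose_spec.2 m₁ hm₂))
    show (hex s).choose ≫ u = s.fst
    rw [← cancel_mono k', Category.assoc, ← hsq1, ← Category.assoc,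
      (hex s).choose_spec.1]
    exact s.condition.symm
  haveI ham : Mono a := hP2 u k k' a hpbK hum
  -- Step 3 : auxiliary pullbacks P and D
  have hc : a ≫ f' = f ≫ b := hsq3.symm
  let c : A ⟶ pullback f' b := pullback.lift a f hc
  have hcA : c ≫ pullback.fst f' b = a := pullback.lift_fst a f hc
  have hcB : c ≫ pullback.snd f' b = f := pullback.lift_snd a f hc
  have hcond : pullback.fst f' b ≫ f' = pullback.snd f' b ≫ b := pullback.condition
  haveI hcm : Mono c := mono_of_comp_eq hcA ham
  have hwNZ : InNZ T ((pullback.fst f' b ≫ a') ≫ f'') := by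
    have : (pullback.fst f' b ≫ a') ≫ f'' = pullback.snd f' b ≫ (b ≫ b') := by
      rw [Category.assoc, ← hsq4, ← Category.assoc, hcond, Category.assoc]
    rw [this]
    exact inNZ_comp_left T (pullback.snd f' b) hbb'.1
  obtain ⟨w, hw, -⟩ := hk''f''.2 (pullback f' b) (pullback.fst f' b ≫ a') hwNZ
  have hcw : InNZ T (c ≫ w) := by
    apply inNZ_of_comp_zkernel hk''f''
    have : (c ≫ w) ≫ k'' = a ≫ a' := by
      rw [Category.assoc, hw, ← Category.assoc, hcA]
    rw [this]
    exact haa'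
  obtain ⟨β, hβ⟩ := inNZ_factors_eps T hcw
  haveI hεK : Mono (T.ε K'') := T.ε_mono K''
  have hDpb : IsPullback (pullback.fst w (T.ε K'')) (pullback.snd w (T.ε K'')) w (T.ε K'') :=
    IsPullback.of_hasPullback w (T.ε K'')
  haveI hρm : Mono (pullback.fst w (T.ε K'')) := mono_fst_of_isPullback hDpb hεK
  have hρw : pullback.fst w (T.ε K'') ≫ w = pullback.snd w (T.ε K'') ≫ T.ε K'' :=
    pullback.condition
  let cb : A ⟶ pullback w (T.ε K'') := pullback.lift c β hβ.symm
  have hcbρ : cb ≫ pullback.fst w (T.ε K'') = c := pullback.lift_fst c β hβ.symm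
  haveI hcbm : Mono cb := mono_of_comp_eq hcbρ hcm
  haveI hkcbm : Mono (k ≫ cb) := mono_comp k cb
  -- Step 4 : k ≫ cb is a Z-kernel of (fst D) ≫ (snd P)
  have hsub : IsZKernel T (k ≫ cb) (pullback.fst w (T.ε K'') ≫ pullback.snd f' b) := by
    constructor
    · have : (k ≫ cb) ≫ pullback.fst w (T.ε K'') ≫ pullback.snd f' b = k ≫ f := by
        calc (k ≫ cb) ≫ pullback.fst w (T.ε K'') ≫ pullback.snd f' b
            = k ≫ (cb ≫ pullback.fst w (T.ε K'')) ≫ pullback.snd f' b := by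
              simp only [Category.assoc]
          _ = k ≫ c ≫ pullback.snd f' b := by rw [hcbρ]
          _ = k ≫ f := by rw [hcB]
      rw [this]
      exact hkf.1
    · intro X x hx
      have h1 : InNZ T ((x ≫ pullback.fst w (T.ε K'') ≫ pullback.fst f' b) ≫ f') := by
        have e1 : (x ≫ pullback.fst w (T.ε K'') ≫ pullback.fst f' b) ≫ f'
            = (x ≫ pullback.fst w (T.ε K'') ≫ pullback.snd f' b) ≫ b := by
          simp only [Category.assoc]
          rw [hcond]
        rw [e1]
        exact inNZ_comp_right T (by simpa only [Category.assoc] using hx) b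
      obtain ⟨s, hs, -⟩ := hk'f'.2 X (x ≫ pullback.fst w (T.ε K'') ≫ pullback.fst f' b) h1
      have h2 : InNZ T (s ≫ u') := by
        have e2 : (s ≫ u') ≫ k''
            = ((x ≫ pullback.snd w (T.ε K'')) ≫ T.ε K'') ≫ k'' := by
          calc (s ≫ u') ≫ k'' = s ≫ u' ≫ k'' := by rw [Category.assoc]
            _ = s ≫ k' ≫ a' := by rw [hsq2]
            _ = (s ≫ k') ≫ a' := by rw [Category.assoc]
            _ = (x ≫ pullback.fst w (T.ε K'') ≫ pullback.fst f' b) ≫ a' := by rw [hs]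
            _ = (x ≫ pullback.fst w (T.ε K'')) ≫ (pullback.fst f' b ≫ a') := by
                simp only [Category.assoc]
            _ = (x ≫ pullback.fst w (T.ε K'')) ≫ (w ≫ k'') := by rw [hw]
            _ = (x ≫ (pullback.fst w (T.ε K'') ≫ w)) ≫ k'' := by
                simp only [Category.assoc]
            _ = (x ≫ (pullback.snd w (T.ε K'') ≫ T.ε K'')) ≫ k'' := by rw [hρw]
            _ = ((x ≫ pullback.snd w (T.ε K'')) ≫ T.ε K'') ≫ k'' := by
                simp only [Category.assoc]
        have : s ≫ u' = (x ≫ pullback.snd w (T.ε K'')) ≫ T.ε K'' := (cancel_mono k'').1 e2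
        rw [this]
        exact ⟨T.zpart K'', T.zpart_mem K'', x ≫ pullback.snd w (T.ε K''), T.ε K'', rfl⟩
      obtain ⟨z, hz, -⟩ := huu'.2 X s h2
      have hzk : z ≫ k ≫ a = x ≫ pullback.fst w (T.ε K'') ≫ pullback.fst f' b := by
        calc z ≫ k ≫ a = z ≫ u ≫ k' := by rw [hsq1]
          _ = (z ≫ u) ≫ k' := by rw [Category.assoc]
          _ = s ≫ k' := by rw [hz]
          _ = x ≫ pullback.fst w (T.ε K'') ≫ pullback.fst f' b := hs
      have hzρ : (z ≫ (k ≫ cb)) ≫ pullback.fst w (T.ε K'') = x ≫ pullback.fst w (T.ε K'') := by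
        apply pullback.hom_ext
        · calc ((z ≫ (k ≫ cb)) ≫ pullback.fst w (T.ε K'')) ≫ pullback.fst f' b
              = z ≫ k ≫ (cb ≫ pullback.fst w (T.ε K'')) ≫ pullback.fst f' b := by
                simp only [Category.assoc]
            _ = z ≫ k ≫ c ≫ pullback.fst f' b := by rw [hcbρ]
            _ = z ≫ k ≫ a := by rw [hcA]
            _ = x ≫ pullback.fst w (T.ε K'') ≫ pullback.fst f' b := hzk
            _ = (x ≫ pullback.fst w (T.ε K'')) ≫ pullback.fst f' b := by
                simp only [Category.assoc]
        · rw [← cancel_mono b]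
          calc (((z ≫ (k ≫ cb)) ≫ pullback.fst w (T.ε K'')) ≫ pullback.snd f' b) ≫ b
              = z ≫ k ≫ (cb ≫ pullback.fst w (T.ε K'')) ≫ pullback.snd f' b ≫ b := by
                simp only [Category.assoc]
            _ = z ≫ k ≫ c ≫ pullback.snd f' b ≫ b := by rw [hcbρ]
            _ = z ≫ k ≫ (c ≫ pullback.snd f' b) ≫ b := by simp only [Category.assoc]
            _ = z ≫ k ≫ f ≫ b := by rw [hcB]
            _ = z ≫ k ≫ a ≫ f' := by rw [hsq3]
            _ = (z ≫ k ≫ a) ≫ f' := by simp only [Category.assoc]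
            _ = (x ≫ pullback.fst w (T.ε K'') ≫ pullback.fst f' b) ≫ f' := by rw [hzk]
            _ = x ≫ pullback.fst w (T.ε K'') ≫ pullback.fst f' b ≫ f' := by
                simp only [Category.assoc]
            _ = x ≫ pullback.fst w (T.ε K'') ≫ pullback.snd f' b ≫ b := by rw [hcond]
            _ = ((x ≫ pullback.fst w (T.ε K'')) ≫ pullback.snd f' b) ≫ b := by
                simp only [Category.assoc]
      have hzx : z ≫ (k ≫ cb) = x := by
        rw [← cancel_mono (pullback.fst w (T.ε K''))]
        exact hzρ
      exact ⟨z, hzx, fun y hy => (cancel_mono (k ≫ cb)).1 (hy.trans hzx.symm)⟩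
  -- Step 5 : cb is an isomorphism
  have hcbf : cb ≫ pullback.fst w (T.ε K'') ≫ pullback.snd f' b = f := by
    rw [← Category.assoc, hcbρ, hcB]
  have hre2 : Nonempty (RegularEpi (cb ≫ pullback.fst w (T.ε K'') ≫ pullback.snd f' b)) := by
    rw [hcbf]; exact hfre
  haveI hcbIso : IsIso cb :=
    keyIso hP1 T (k ≫ cb) (pullback.fst w (T.ε K'') ≫ pullback.snd f' b) hsub cb hcbm k rfl hre2
  -- Step 6 : c is a Z-kernel of w
  have hcker : IsZKernel T c w := by
    refine ⟨hcw, ?_⟩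
    intro E e he
    obtain ⟨y, hy⟩ := inNZ_factors_eps T he
    let d : E ⟶ pullback w (T.ε K'') := pullback.lift e y hy.symm
    have hdρ : d ≫ pullback.fst w (T.ε K'') = e := pullback.lift_fst e y hy.symm
    have hfac : (d ≫ inv cb) ≫ c = e := by
      rw [← hcbρ]
      simp only [Category.assoc, IsIso.inv_hom_id_assoc]
      exact hdρ
    exact ⟨d ≫ inv cb, hfac, fun y' hy' => (cancel_mono c).1 (hy'.trans hfac.symm)⟩
  -- Step 7 : conclusion
  refine ⟨ha're, haa', ?_⟩
  intro E e he
  have h1 : InNZ T ((e ≫ f') ≫ b') := by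
    have : (e ≫ f') ≫ b' = (e ≫ a') ≫ f'' := by
      rw [Category.assoc, hsq4, Category.assoc]
    rw [this]
    exact inNZ_comp_right T he f''
  obtain ⟨t, ht, -⟩ := hbb'.2 E (e ≫ f') h1
  let d : E ⟶ pullback f' b := pullback.lift e t ht.symm
  have hdA : d ≫ pullback.fst f' b = e := pullback.lift_fst e t ht.symm
  have hdw : InNZ T (d ≫ w) := by
    apply inNZ_of_comp_zkernel hk''f''
    have : (d ≫ w) ≫ k'' = e ≫ a' := by
      rw [Category.assoc, hw, ← Category.assoc, hdA]
    rw [this]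
    exact he
  obtain ⟨φ, hφ, -⟩ := hcker.2 E d hdw
  have hφa : φ ≫ a = e := by
    rw [← hcA, ← Category.assoc, hφ, hdA]
  exact ⟨φ, hφa, fun y hy => (cancel_mono a).1 (hy.trans hφa.symm)⟩
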